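/- arXiv:math/0409389 — 2 statements merged into one kernel-verified Lean document; each statement's English description precedes it below -/
import Mathlib

section
/- Let u, v ∈ C_b(ℝᴺ) be such that sup(u - v) is attained at some point x̄. If S : ℝ × ℝᴺ × ℝ × C_b(ℝᴺ) → ℝ satisfies the monotonicity condition S(h, x, r + m, w + m) ≥ λm + S(h, x, r, w') whenever m ≥ 0 and w ≤ w' pointwise (with λ > 0), and u, v satisfy S(h, ·, u(·), u) ≤ 0 and S(h, ·, v(·), v) ≥ 0 pointwise, then u ≤ v on ℝᴺ. -/
/-- Lemma 3.2 (CompLem): comparison principle for monotone abstract schemes.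
If `S` satisfies the monotonicity condition (S1) with `λ > 0`, and bounded
continuous `u`, `v` are sub- and supersolutions of the scheme, then `u ≤ v`. -/
theorem stmt_5 (N : ℕ) (A Abar : ℝ → ℝ) (hA : Antitone A) (hAbar : Antitone Abar)
    (S : ℝ → EuclideanSpace ℝ (Fin N) → ℝ → (EuclideanSpace ℝ (Fin N) → ℝ) → ℝ)
    (h lam : ℝ) (hlam : 0 < lam)
    (u v : EuclideanSpace ℝ (Fin N) → ℝ)
    (hu : Continuous u) (hv : Continuous v)
    (hub : ∃ M, ∀ x, |u x| ≤ M) (hvb : ∃ M, ∀ x, |v x| ≤ M)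
    (hsup : ∃ xb, ∀ x, u x - v x ≤ u xb - v xb)
    (hmono : ∀ (x : EuclideanSpace ℝ (Fin N)) (r m : ℝ)
      (w w' : EuclideanSpace ℝ (Fin N) → ℝ), 0 ≤ m → (∀ y, w y ≤ w' y) →
      lam * m + S h x r w' ≤ S h x (r + m) (fun y => w y + m))
    (hsub : ∀ x, S h x (u x) u ≤ 0) (hsuper : ∀ x, 0 ≤ S h x (v x) v) :
    ∀ x, u x ≤ v x := by
  obtain ⟨xb, hxb⟩ := hsup
  by_contra hcon
  push_neg at hcon
  obtain ⟨x0, hx0⟩ := hcon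
  set m : ℝ := u xb - v xb with hm
  have hmpos : 0 < m := lt_of_lt_of_le (by linarith) (hxb x0)
  have step1 : lam * m + S h xb (v xb) v ≤ S h xb (v xb + m) (fun y => v y + m) :=
    hmono xb (v xb) m v v hmpos.le (fun y => le_refl _)
  have step2 : lam * 0 + S h xb (u xb) (fun y => v y + m) ≤
      S h xb (u xb + 0) (fun y => u y + 0) :=
    hmono xb (u xb) 0 u (fun y => v y + m) le_rfl (fun y => by have := hxb y; show u y ≤ v y + m; linarith)
  have e1 : v xb + m = u xb := by ring
  have e2 : (fun y => u y + 0) = u := by funext y; ring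
  rw [e1] at step1
  rw [e2, add_zero, mul_zero, zero_add] at step2
  have := hsub xb
  have := hsuper xb
  nlinarith
end

section
/- Let λ > 0, and let F : ℝᴺ × ℝ × ℝᴺ × Sym(N) → ℝ satisfy: F(x,r,p,X) - F(x,s,p,X) ≥ λ(r-s) whenever r ≥ s (strict monotonicity in r). Let u be a classical solution of min{F(x,u,Du,D²u), u - g} = 0 and suppose v is a classical solution of F(x,v,Dv,D²v) = (1/ε)(v-g)⁻ with (v-g)⁻ = max(g-v,0). Then w := v + ‖(v-g)⁻‖_∞ is a classical supersolution of the obstacle problem: min{F(x,w,Dw,D²w), w - g} ≥ 0 pointwise. -/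
/-- Key computation of Lemma 2.2 (uv-err): with `M := ‖(v-g)⁻‖_∞`, the
function `v + M` is a classical supersolution of the obstacle problem. -/
theorem stmt_6 (N : ℕ) (lam ε : ℝ) (hlam : 0 < lam) (hε : 0 < ε)
    (F : EuclideanSpace ℝ (Fin N) → ℝ → EuclideanSpace ℝ (Fin N) →
      Matrix (Fin N) (Fin N) ℝ → ℝ)
    (hF : ∀ x r s p X, s ≤ r → lam * (r - s) ≤ F x r p X - F x s p X)
    (u g v : EuclideanSpace ℝ (Fin N) → ℝ)
    (Du Dv : EuclideanSpace ℝ (Fin N) → EuclideanSpace ℝ (Fin N))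
    (D2u D2v : EuclideanSpace ℝ (Fin N) → Matrix (Fin N) (Fin N) ℝ)
    (hu : ∀ x, min (F x (u x) (Du x) (D2u x)) (u x - g x) = 0)
    (hveq : ∀ x, F x (v x) (Dv x) (D2v x) = (1 / ε) * max (g x - v x) 0)
    (M : ℝ) (hM : ∀ x, max (g x - v x) 0 ≤ M) :
    ∀ x, 0 ≤ min (F x (v x + M) (Dv x) (D2v x)) (v x + M - g x) := by
  intro x
  have hM0 : 0 ≤ M := le_trans (le_max_right _ _) (hM x)
  have h1 := hF x (v x + M) (v x) (Dv x) (D2v x) (by linarith)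
  have h2 : 0 ≤ F x (v x) (Dv x) (D2v x) := by
    rw [hveq x]; positivity
  have h3 : g x - v x ≤ M := le_trans (le_max_left _ _) (hM x)
  refine le_min ?_ (by linarith)
  nlinarith
end
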